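/- arXiv:2512.24353 — 2 statements merged into one kernel-verified Lean document; each statement's English description precedes it below -/
import Mathlib

section
/- Let n ≥ 2, let E be a complex Hilbert space, let E_1,…,E_{n−1} be bounded operators on E, and for i = 1,…,n−1 set Φ_i(z) = E_i* + z E_{n−i} and M_{Φ_i} := (E_i*)~ + S∘(E_{n−i})~ on ℓ²(ℕ,E). Then: (1) for every i = 1,…,n−1, M_{Φ_i} commutes with the shift S and M_{Φ_i} = (M_{Φ_{n−i}})* S; (2) the operators M_{Φ_1},…,M_{Φ_{n−1}} pairwise commute if and only if E_1,…,E_{n−1} satisfy the commutativity condition. In particular, the tuple (M_{Φ_1},…,M_{Φ_{n−1}}, S) is commuting if and only if the commutativity condition holds. -/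
noncomputable section

open scoped ENNReal

namespace GammaModel

variable {E : Type*} [NormedAddCommGroup E] [NormedSpace ℂ E]

/-- The `E`-valued Hardy space `H²_E(𝔻)`, identified with `ℓ²(ℕ, E)`. -/
abbrev L2 (E : Type*) [NormedAddCommGroup E] [NormedSpace ℂ E] : Type _ :=
  lp (fun _ : ℕ => E) 2

/-- The underlying function of the unilateral shift. -/
def shiftFun (f : ℕ → E) : ℕ → E
  | 0 => 0
  | (k + 1) => f k

lemma rpow_toReal_two (x : ℝ) : x ^ ((2 : ℝ≥0∞)).toReal = x ^ (2 : ℕ) := by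
  rw [show ((2 : ℝ≥0∞)).toReal = ((2 : ℕ) : ℝ) by norm_num, Real.rpow_natCast]

lemma summable_sq_of_mem (f : L2 E) :
    Summable (fun k => ‖(f : ∀ _ : ℕ, E) k‖ ^ (2 : ℕ)) := by
  have h := lp.memℓp f
  rw [memℓp_gen_iff (by norm_num)] at h
  simpa [rpow_toReal_two] using h

lemma memℓp_shiftFun (f : L2 E) : Memℓp (shiftFun (f : ∀ _ : ℕ, E)) 2 := by
  rw [memℓp_gen_iff (by norm_num)]
  apply (summable_nat_add_iff 1).mp
  simpa [shiftFun, rpow_toReal_two] using summable_sq_of_mem f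

/-- The unilateral shift as a linear map on `ℓ²(ℕ, E)`. -/
def shiftLM : L2 E →ₗ[ℂ] L2 E where
  toFun f := ⟨shiftFun (f : ∀ _ : ℕ, E), memℓp_shiftFun f⟩
  map_add' f g := by
    ext k
    cases k <;> simp [shiftFun, lp.coeFn_add, Pi.add_apply] <;> first | rfl | exact (add_zero (0 : E)).symm
  map_smul' c f := by
    ext k
    cases k <;> simp [shiftFun, lp.coeFn_smul, Pi.smul_apply]

lemma norm_shiftLM (f : L2 E) : ‖shiftLM f‖ = ‖f‖ := by
  have h2 : (0:ℝ) < ((2 : ℝ≥0∞)).toReal := by norm_num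
  have hs := lp.norm_rpow_eq_tsum h2 (shiftLM f)
  have hf := lp.norm_rpow_eq_tsum h2 f
  have hsum : Summable (fun k => ‖(shiftLM f : ∀ _ : ℕ, E) k‖ ^ ((2:ℝ≥0∞)).toReal) := by
    have h := memℓp_shiftFun f
    rw [memℓp_gen_iff h2] at h
    exact h
  have key : ∑' k, ‖(shiftLM f : ∀ _ : ℕ, E) k‖ ^ ((2:ℝ≥0∞)).toReal
      = ∑' k, ‖(f : ∀ _ : ℕ, E) k‖ ^ ((2:ℝ≥0∞)).toReal := by
    rw [hsum.tsum_eq_zero_add]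
    simp [shiftLM, shiftFun]
  have : ‖shiftLM f‖ ^ ((2:ℝ≥0∞)).toReal = ‖f‖ ^ ((2:ℝ≥0∞)).toReal := by
    rw [hs, hf, key]
  rw [rpow_toReal_two, rpow_toReal_two] at this
  have h1 : (0:ℝ) ≤ ‖shiftLM f‖ := norm_nonneg _
  have h2' : (0:ℝ) ≤ ‖f‖ := norm_nonneg _
  nlinarith [this, h1, h2']

/-- The unilateral shift `S` on `ℓ²(ℕ, E)`: `(Sf)(0) = 0`, `(Sf)(k+1) = f(k)`. -/
def shiftL : L2 E →L[ℂ] L2 E :=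
  LinearMap.mkContinuous shiftLM 1 (fun f => by rw [norm_shiftLM]; simp)

@[simp] lemma shiftL_apply_zero (f : L2 E) : (shiftL f : ∀ _ : ℕ, E) 0 = 0 := rfl

@[simp] lemma shiftL_apply_succ (f : L2 E) (k : ℕ) :
    (shiftL f : ∀ _ : ℕ, E) (k + 1) = (f : ∀ _ : ℕ, E) k := rfl

lemma memℓp_diagFun (C : E →L[ℂ] E) (f : L2 E) :
    Memℓp (fun k => C ((f : ∀ _ : ℕ, E) k)) 2 := by
  rw [memℓp_gen_iff (by norm_num)]
  have hf := summable_sq_of_mem f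
  refine Summable.of_nonneg_of_le (f := fun k => ‖C‖ ^ (2:ℕ) * ‖(f : ∀ _ : ℕ, E) k‖ ^ (2:ℕ))
    (fun k => by positivity) (fun k => ?_) (hf.mul_left _)
  show ‖C ((f : ∀ _ : ℕ, E) k)‖ ^ ((2:ℝ≥0∞)).toReal ≤ ‖C‖ ^ (2:ℕ) * ‖(f : ∀ _ : ℕ, E) k‖ ^ (2:ℕ)
  rw [rpow_toReal_two, ← mul_pow]
  exact pow_le_pow_left₀ (norm_nonneg _) (C.le_opNorm _) 2

/-- The diagonal operator `C̃` on `ℓ²(ℕ, E)`: `(C̃ f)(k) = C (f k)`. -/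
def diagLM (C : E →L[ℂ] E) : L2 E →ₗ[ℂ] L2 E where
  toFun f := ⟨fun k => C ((f : ∀ _ : ℕ, E) k), memℓp_diagFun C f⟩
  map_add' f g := by ext k; simp [lp.coeFn_add, Pi.add_apply]; rfl
  map_smul' c f := by ext k; simp [lp.coeFn_smul, Pi.smul_apply]

lemma norm_diagLM (C : E →L[ℂ] E) (f : L2 E) : ‖diagLM C f‖ ≤ ‖C‖ * ‖f‖ := by
  have h2 : (0:ℝ) < ((2 : ℝ≥0∞)).toReal := by norm_num
  have hs := lp.norm_rpow_eq_tsum h2 (diagLM C f)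
  have hf := lp.norm_rpow_eq_tsum h2 f
  have hsum : Summable (fun k => ‖(diagLM C f : ∀ _ : ℕ, E) k‖ ^ ((2:ℝ≥0∞)).toReal) := by
    have h := memℓp_diagFun C f
    rw [memℓp_gen_iff h2] at h
    exact h
  have hle : ‖diagLM C f‖ ^ (2:ℕ) ≤ (‖C‖ * ‖f‖) ^ (2:ℕ) := by
    rw [← rpow_toReal_two, hs]
    calc ∑' k, ‖(diagLM C f : ∀ _ : ℕ, E) k‖ ^ ((2:ℝ≥0∞)).toReal
        ≤ ∑' k, ‖C‖ ^ (2:ℕ) * ‖(f : ∀ _ : ℕ, E) k‖ ^ (2:ℕ) := by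
          apply Summable.tsum_le_tsum _ hsum ((summable_sq_of_mem f).mul_left _)
          intro k
          show ‖(diagLM C f : ∀ _ : ℕ, E) k‖ ^ ((2:ℝ≥0∞)).toReal
            ≤ ‖C‖ ^ (2:ℕ) * ‖(f : ∀ _ : ℕ, E) k‖ ^ (2:ℕ)
          rw [rpow_toReal_two, ← mul_pow]
          exact pow_le_pow_left₀ (norm_nonneg _) (C.le_opNorm _) 2
      _ = ‖C‖ ^ (2:ℕ) * ∑' k, ‖(f : ∀ _ : ℕ, E) k‖ ^ (2:ℕ) := by rw [tsum_mul_left]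
      _ = (‖C‖ * ‖f‖) ^ (2:ℕ) := by
          rw [mul_pow]
          congr 1
          rw [← rpow_toReal_two ‖f‖, hf]
          exact (tsum_congr (fun k => by rw [rpow_toReal_two])).symm
  have := le_of_pow_le_pow_left₀ (by norm_num) (by positivity) hle
  exact this

/-- The operator `C̃` on `ℓ²(ℕ, E)` induced by `C : E →L[ℂ] E`, `(C̃ f)(k) = C (f k)`. -/
def diagL (C : E →L[ℂ] E) : L2 E →L[ℂ] L2 E :=
  LinearMap.mkContinuous (diagLM C) ‖C‖ (norm_diagLM C)

@[simp] lemma diagL_apply (C : E →L[ℂ] E) (f : L2 E) (k : ℕ) :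
    (diagL C f : ∀ _ : ℕ, E) k = C ((f : ∀ _ : ℕ, E) k) := rfl

end GammaModel
namespace GammaModel

variable {E : Type*} [NormedAddCommGroup E] [InnerProductSpace ℂ E] [CompleteSpace E]

/-- The commutativity condition for a family `E_1, …, E_{n-1}` (indexed here by `Fin (n-1)`,
with `Fin.rev i` playing the role of the index `n - i`):
`[E_i, E_j] = 0` and `[E_i*, E_{n-j}] = [E_j*, E_{n-i}]` for all `i, j`. -/
def CommutativityCondition {m : ℕ} (Es : Fin m → E →L[ℂ] E) : Prop :=
  (∀ i j, Es i * Es j = Es j * Es i) ∧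
  (∀ i j, ContinuousLinearMap.adjoint (Es i) * Es (Fin.rev j)
        - Es (Fin.rev j) * ContinuousLinearMap.adjoint (Es i)
      = ContinuousLinearMap.adjoint (Es j) * Es (Fin.rev i)
        - Es (Fin.rev i) * ContinuousLinearMap.adjoint (Es j))

/-- The Toeplitz operator `M_{Φ_i}` with symbol `Φ_i(z) = E_i* + z E_{n-i}`, i.e.
`(E_i*)~ + S ∘ (E_{n-i})~`, for a family indexed by `Fin (n-1)` (so `E_{n-i}` is
`Es (Fin.rev i)`). -/
def MPhi {m : ℕ} (Es : Fin m → E →L[ℂ] E) (i : Fin m) : L2 E →L[ℂ] L2 E :=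
  diagL (ContinuousLinearMap.adjoint (Es i)) + shiftL.comp (diagL (Es (Fin.rev i)))

end GammaModel

/-!
Since `M_{A+zB} = Ã + S B̃` and `S` commutes with every diagonal operator `C̃`, the product
`M_{A+zB} M_{C+zD}` is the Toeplitz operator of the symbol `AC + z(AD + BC) + z²BD`, and
applying an operator `X̃ + S Ỹ + S² Z̃` to `x δ₀` reads off `X x`, `Y x`, `Z x`. So `M_{Φ_i}`
and `M_{Φ_j}` commute iff the coefficients of `Φ_i Φ_j` and `Φ_j Φ_i` agree, which for all
`i, j` is exactly the commutativity condition. The identity `M_{Φ_i} = M_{Φ_{n-i}}* S` follows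
from `(C̃)* = (C*)~` and `S* S = 1`.
-/

namespace GammaModel

section Toeplitz

variable {E : Type*} [NormedAddCommGroup E] [NormedSpace ℂ E]

lemma diagL_add (C D : E →L[ℂ] E) : diagL (C + D) = diagL C + diagL D := by
  ext f k
  simp

lemma diagL_mul (C D : E →L[ℂ] E) : diagL (C * D) = diagL C * diagL D := by
  ext f k
  simp

lemma diagL_commute_shiftL (C : E →L[ℂ] E) : Commute (diagL C) shiftL := by
  ext f k
  cases k <;> simp

/-- `M_Φ` for the linear symbol `Φ(z) = A + z B`. -/
def linearToeplitz (A B : E →L[ℂ] E) : L2 E →L[ℂ] L2 E :=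
  diagL A + shiftL * diagL B

/-- `M_Φ` for the quadratic symbol `Φ(z) = X + z Y + z² Z`. -/
def quadraticToeplitz (X Y Z : E →L[ℂ] E) : L2 E →L[ℂ] L2 E :=
  diagL X + shiftL * diagL Y + shiftL ^ 2 * diagL Z

lemma linearToeplitz_commute_shiftL (A B : E →L[ℂ] E) : Commute (linearToeplitz A B) shiftL :=
  (diagL_commute_shiftL A).add_left ((Commute.refl shiftL).mul_left (diagL_commute_shiftL B))

lemma linearToeplitz_mul (A B C D : E →L[ℂ] E) :
    linearToeplitz A B * linearToeplitz C D = quadraticToeplitz (A * C) (A * D + B * C) (B * D) := by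
  have hA := (diagL_commute_shiftL A).eq
  have hB := (diagL_commute_shiftL B).eq
  simp only [linearToeplitz, quadraticToeplitz, diagL_add, diagL_mul, mul_add, add_mul, pow_two]
  rw [← mul_assoc (diagL A) shiftL, hA, mul_assoc shiftL (diagL B) (shiftL * diagL D),
    ← mul_assoc (diagL B) shiftL, hB]
  simp only [mul_assoc]
  abel

lemma quadraticToeplitz_inj {X Y Z X' Y' Z' : E →L[ℂ] E} :
    quadraticToeplitz X Y Z = quadraticToeplitz X' Y' Z' ↔ X = X' ∧ Y = Y' ∧ Z = Z' := by
  refine ⟨fun h => ?_, by rintro ⟨rfl, rfl, rfl⟩; rfl⟩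
  have coeff (k : ℕ) (x : E) := congrArg (fun T => (T (lp.single 2 0 x) : ℕ → E) k) h
  refine ⟨ContinuousLinearMap.ext fun x => ?_, ContinuousLinearMap.ext fun x => ?_,
    ContinuousLinearMap.ext fun x => ?_⟩
  · simpa [quadraticToeplitz, pow_two] using coeff 0 x
  -- indices written `0 + 1`, `0 + 1 + 1` so that `shiftL_apply_succ` fires
  · simpa [quadraticToeplitz, pow_two] using coeff (0 + 1) x
  · simpa [quadraticToeplitz, pow_two] using coeff (0 + 1 + 1) x

lemma linearToeplitz_commute_iff (A B C D : E →L[ℂ] E) :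
    Commute (linearToeplitz A B) (linearToeplitz C D) ↔
      Commute A C ∧ A * D + B * C = C * B + D * A ∧ Commute B D := by
  rw [commute_iff_eq, linearToeplitz_mul, linearToeplitz_mul, quadraticToeplitz_inj]
  rfl

end Toeplitz

section Adjoint

variable {E : Type*} [NormedAddCommGroup E] [InnerProductSpace ℂ E] [CompleteSpace E]

open ContinuousLinearMap

lemma star_diagL (C : E →L[ℂ] E) : star (diagL C : L2 E →L[ℂ] L2 E) = diagL (star C) := by
  rw [star_eq_adjoint, star_eq_adjoint, eq_comm, eq_adjoint_iff]
  intro f g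
  rw [lp.inner_eq_tsum, lp.inner_eq_tsum]
  exact tsum_congr fun k => by simp [adjoint_inner_left]

lemma star_shiftL_mul_shiftL : star (shiftL : L2 E →L[ℂ] L2 E) * shiftL = 1 := by
  have h : ∀ f : L2 E, ‖shiftL f‖ = ‖f‖ := fun f => by
    rw [shiftL, LinearMap.mkContinuous_apply, norm_shiftLM]
  rw [star_eq_adjoint, mul_def]
  exact (norm_map_iff_adjoint_comp_self _).mp h

lemma linearToeplitz_eq_star_mul_shiftL (A B : E →L[ℂ] E) :
    linearToeplitz A B = star (linearToeplitz (star B) (star A)) * shiftL := by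
  simp only [linearToeplitz, star_add, star_mul, star_diagL, star_star, add_mul, mul_assoc,
    star_shiftL_mul_shiftL, mul_one, (diagL_commute_shiftL B).eq]
  exact add_comm _ _

lemma mphi_eq_linearToeplitz {m : ℕ} (Es : Fin m → E →L[ℂ] E) (i : Fin m) :
    MPhi Es i = linearToeplitz (star (Es i)) (Es i.rev) :=
  rfl

lemma mphi_eq_adjoint_mul_shiftL {m : ℕ} (Es : Fin m → E →L[ℂ] E) (i : Fin m) :
    MPhi Es i = adjoint (MPhi Es i.rev) * shiftL := by
  rw [mphi_eq_linearToeplitz, mphi_eq_linearToeplitz, Fin.rev_rev, ← star_eq_adjoint]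
  simpa only [star_star] using linearToeplitz_eq_star_mul_shiftL (star (Es i)) (Es i.rev)

lemma commute_mphi_iff {m : ℕ} (Es : Fin m → E →L[ℂ] E) :
    (∀ i j, Commute (MPhi Es i) (MPhi Es j)) ↔ CommutativityCondition Es := by
  simp only [mphi_eq_linearToeplitz, linearToeplitz_commute_iff, commute_star_star, forall_and,
    CommutativityCondition, ← star_eq_adjoint, sub_eq_sub_iff_add_eq_add]
  constructor
  · rintro ⟨hcomm, hmixed, -⟩
    exact ⟨hcomm, hmixed⟩
  · rintro ⟨hcomm, hmixed⟩
    exact ⟨hcomm, hmixed, fun i j => hcomm i.rev j.rev⟩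

end Adjoint

end GammaModel

open GammaModel

theorem mphi_commute_iff_general {n : ℕ}
    {E : Type*} [NormedAddCommGroup E] [InnerProductSpace ℂ E] [CompleteSpace E]
    (Es : Fin (n - 1) → E →L[ℂ] E) :
    (∀ i, MPhi Es i * shiftL = shiftL * MPhi Es i ∧
      MPhi Es i = ContinuousLinearMap.adjoint (MPhi Es (Fin.rev i)) * shiftL) ∧
    ((∀ i j, MPhi Es i * MPhi Es j = MPhi Es j * MPhi Es i) ↔ CommutativityCondition Es) ∧
    (((∀ i j, MPhi Es i * MPhi Es j = MPhi Es j * MPhi Es i) ∧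
        (∀ i, MPhi Es i * shiftL = shiftL * MPhi Es i)) ↔ CommutativityCondition Es) := by
  have hshift (i : Fin (n - 1)) : Commute (MPhi Es i) shiftL :=
    linearToeplitz_commute_shiftL _ _
  have hcomm := commute_mphi_iff Es
  refine ⟨fun i => ⟨hshift i, mphi_eq_adjoint_mul_shiftL Es i⟩, hcomm, ?_⟩
  rw [← hcomm]
  exact and_iff_left_of_imp fun _ => hshift

/-- For operators `E_1, …, E_{n-1}` on `E` and the Toeplitz operators
`M_{Φ_i} = (E_i*)~ + S∘(E_{n-i})~` on `ℓ²(ℕ,E)`: (1) each `M_{Φ_i}` commutes with the shift `S`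
and `M_{Φ_i} = (M_{Φ_{n-i}})* S`; (2) the `M_{Φ_i}` pairwise commute iff `E_1, …, E_{n-1}`
satisfy the commutativity condition; in particular `(M_{Φ_1}, …, M_{Φ_{n-1}}, S)` is a
commuting tuple iff the commutativity condition holds. -/
theorem mphi_commute_iff {n : ℕ} (hn : 2 ≤ n)
    {E : Type*} [NormedAddCommGroup E] [InnerProductSpace ℂ E] [CompleteSpace E]
    (Es : Fin (n - 1) → E →L[ℂ] E) :
    (∀ i, MPhi Es i * shiftL = shiftL * MPhi Es i ∧
      MPhi Es i = ContinuousLinearMap.adjoint (MPhi Es (Fin.rev i)) * shiftL) ∧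
    ((∀ i j, MPhi Es i * MPhi Es j = MPhi Es j * MPhi Es i) ↔ CommutativityCondition Es) ∧
    (((∀ i j, MPhi Es i * MPhi Es j = MPhi Es j * MPhi Es i) ∧
        (∀ i, MPhi Es i * shiftL = shiftL * MPhi Es i)) ↔ CommutativityCondition Es) :=
  mphi_commute_iff_general Es
end
end

section
/- (Factorization of isometric dilations.) Let T be a contraction on a complex Hilbert space H. Let V be an isometry on a complex Hilbert space K and let E : H → K be a linear isometry with E T* = V* E. Let V_m be an isometry on a complex Hilbert space K_m and E_m : H → K_m a linear isometry with E_m T* = V_m* E_m, and assume minimality: K_m equals the closed linear span of ⋃_{k≥0} V_mᵏ(E_m(H)). Then there exists a unique linear isometry Ξ : K_m → K such that E = Ξ ∘ E_m and Ξ V_m* = V* Ξ. -/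
/-!
For an isometric dilation `(V, E)` of `T` one has `⟪Vʲ E h, Vʲ⁺ᵈ E g⟫ = ⟪T*ᵈ h, g⟫`, so the Gram
matrix of the vectors `Vᵏ E h` is the same for every dilation of `T`. Hence `Vmᵏ Em h ↦ Vᵏ E h`
extends, by minimality, to a linear isometry `Ξ`, and `Ξ` intertwines the adjoints because it does
so on these vectors. Conversely, an isometry `Ξ` with `Ξ Em = E` and `Ξ Vm* = V* Ξ` also satisfies
`Ξ Vm = V Ξ`, since `V z` is the only vector of norm at most `‖z‖` that `V*` sends to `z`; so it
maps `Vmᵏ Em h` to `Vᵏ E h` and is determined on a dense subspace.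
-/

noncomputable section

open ContinuousLinearMap
open scoped InnerProductSpace

section GramExtension

variable {𝕜 ι E F : Type*} [RCLike 𝕜]
  [NormedAddCommGroup E] [InnerProductSpace 𝕜 E] [NormedAddCommGroup F] [InnerProductSpace 𝕜 F]

theorem inner_linearCombination_eq_of_inner_eq {u : ι → E} {w : ι → F}
    (huw : ∀ i j, ⟪u i, u j⟫_𝕜 = ⟪w i, w j⟫_𝕜) (c d : ι →₀ 𝕜) :
    ⟪Finsupp.linearCombination 𝕜 u c, Finsupp.linearCombination 𝕜 u d⟫_𝕜 =
      ⟪Finsupp.linearCombination 𝕜 w c, Finsupp.linearCombination 𝕜 w d⟫_𝕜 := by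
  simp only [Finsupp.linearCombination_apply, Finsupp.sum, sum_inner, inner_sum,
    inner_smul_left, inner_smul_right, huw]

theorem norm_linearCombination_eq_of_inner_eq {u : ι → E} {w : ι → F}
    (huw : ∀ i j, ⟪u i, u j⟫_𝕜 = ⟪w i, w j⟫_𝕜) (c : ι →₀ 𝕜) :
    ‖Finsupp.linearCombination 𝕜 w c‖ = ‖Finsupp.linearCombination 𝕜 u c‖ := by
  rw [norm_eq_sqrt_re_inner (𝕜 := 𝕜), norm_eq_sqrt_re_inner (𝕜 := 𝕜),
    inner_linearCombination_eq_of_inner_eq huw]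

theorem LinearIsometry.exists_apply_eq_of_inner_eq [CompleteSpace F] {u : ι → E} {w : ι → F}
    (hu : Dense (Submodule.span 𝕜 (Set.range u) : Set E))
    (huw : ∀ i j, ⟪u i, u j⟫_𝕜 = ⟪w i, w j⟫_𝕜) :
    ∃ Ξ : E →ₗᵢ[𝕜] F, ∀ i, Ξ (u i) = w i := by
  set U := Finsupp.linearCombination 𝕜 u
  set W := Finsupp.linearCombination 𝕜 w
  have hdense : DenseRange U := by
    rwa [DenseRange, ← LinearMap.coe_range, Finsupp.range_linearCombination]
  have hnorm := norm_linearCombination_eq_of_inner_eq huw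
  have hbound : ∃ C, ∀ c, ‖W c‖ ≤ C * ‖U c‖ := ⟨1, fun c => (hnorm c).trans_le (one_mul _).ge⟩
  set Ξ := W.extendOfNorm U
  have hΞ : ∀ c, Ξ (U c) = W c := LinearMap.extendOfNorm_eq hdense hbound
  have hΞnorm : ∀ x, ‖Ξ x‖ = ‖x‖ := fun x =>
    hdense.induction_on x (isClosed_eq Ξ.continuous.norm continuous_norm)
      fun c => (congrArg norm (hΞ c)).trans (hnorm c)
  refine ⟨⟨Ξ, hΞnorm⟩, fun i => ?_⟩
  simpa [U, W] using hΞ (Finsupp.single i 1)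

end GramExtension

namespace ContinuousLinearMap

variable {𝕜 K : Type*} [RCLike 𝕜] [NormedAddCommGroup K] [InnerProductSpace 𝕜 K]
  {V : K →L[𝕜] K}

theorem norm_pow_apply_of_norm_map (hV : ∀ x, ‖V x‖ = ‖x‖) (k : ℕ) (x : K) :
    ‖(V ^ k) x‖ = ‖x‖ := by
  induction k with
  | zero => rfl
  | succ k ih => rw [pow_succ', mul_apply_eq_comp, hV, ih]

theorem inner_pow_apply_pow_apply_of_norm_map (hV : ∀ x, ‖V x‖ = ‖x‖) (k : ℕ) (x y : K) :
    ⟪(V ^ k) x, (V ^ k) y⟫_𝕜 = ⟪x, y⟫_𝕜 :=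
  (LinearMap.norm_map_iff_inner_map_map (V ^ k)).mp (norm_pow_apply_of_norm_map hV k) x y

variable [CompleteSpace K]

theorem adjoint_apply_apply_of_norm_map (hV : ∀ x, ‖V x‖ = ‖x‖) (x : K) :
    adjoint V (V x) = x :=
  congr($((norm_map_iff_adjoint_comp_self V).mp hV) x)

theorem eq_apply_of_adjoint_apply_eq (hV : ∀ x, ‖V x‖ = ‖x‖) {y z : K}
    (hyz : adjoint V y = z) (hy : ‖y‖ ≤ ‖z‖) : y = V z := by
  have hsq : ‖y - V z‖ ^ 2 = ‖y‖ ^ 2 - ‖z‖ ^ 2 := by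
    rw [norm_sub_sq (𝕜 := 𝕜), ← adjoint_inner_left, hyz, inner_self_eq_norm_sq, hV]
    ring
  have h0 : ‖y - V z‖ ^ 2 = 0 :=
    le_antisymm (by rw [hsq, sub_nonpos]; gcongr) (sq_nonneg _)
  simpa [sub_eq_zero] using h0

end ContinuousLinearMap

theorem LinearIsometry.apply_apply_eq_of_apply_adjoint {𝕜 K K' : Type*} [RCLike 𝕜]
    [NormedAddCommGroup K] [InnerProductSpace 𝕜 K] [CompleteSpace K]
    [NormedAddCommGroup K'] [InnerProductSpace 𝕜 K'] [CompleteSpace K']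
    {V : K →L[𝕜] K} {V' : K' →L[𝕜] K'} (hV : ∀ x, ‖V x‖ = ‖x‖) (hV' : ∀ x, ‖V' x‖ = ‖x‖)
    (Ξ : K' →ₗᵢ[𝕜] K) (hΞ : ∀ x, Ξ (adjoint V' x) = adjoint V (Ξ x)) (x : K') :
    Ξ (V' x) = V (Ξ x) := by
  refine eq_apply_of_adjoint_apply_eq hV ?_ ?_
  · rw [← hΞ, adjoint_apply_apply_of_norm_map hV']
  · rw [Ξ.norm_map, Ξ.norm_map, hV']

section Dilation

variable {𝕜 H K : Type*} [RCLike 𝕜]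
  [NormedAddCommGroup H] [InnerProductSpace 𝕜 H] [NormedAddCommGroup K] [InnerProductSpace 𝕜 K]

def dilationOrbit (V : K →L[𝕜] K) (E : H →ₗᵢ[𝕜] K) (p : ℕ × H) : K := (V ^ p.1) (E p.2)

theorem dilationOrbit_succ (V : K →L[𝕜] K) (E : H →ₗᵢ[𝕜] K) (k : ℕ) (h : H) :
    dilationOrbit V E (k + 1, h) = V (dilationOrbit V E (k, h)) := by
  rw [dilationOrbit, dilationOrbit, pow_succ', mul_apply_eq_comp]

theorem range_dilationOrbit (V : K →L[𝕜] K) (E : H →ₗᵢ[𝕜] K) :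
    Set.range (dilationOrbit V E) = ⋃ k : ℕ, (V ^ k) '' Set.range E := by
  ext x
  simp [dilationOrbit]

variable [CompleteSpace H] [CompleteSpace K]

structure IsIsometricDilation (T : H →L[𝕜] H) (V : K →L[𝕜] K) (E : H →ₗᵢ[𝕜] K) : Prop where
  norm_map : ∀ x, ‖V x‖ = ‖x‖
  apply_adjoint : ∀ h, E (adjoint T h) = adjoint V (E h)

namespace IsIsometricDilation

variable {T : H →L[𝕜] H} {V : K →L[𝕜] K} {E : H →ₗᵢ[𝕜] K}

theorem inner_apply_pow_apply (hD : IsIsometricDilation T V E) (d : ℕ) (h g : H) :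
    ⟪E h, (V ^ d) (E g)⟫_𝕜 = ⟪(adjoint T ^ d) h, g⟫_𝕜 := by
  induction d generalizing h with
  | zero => simp
  | succ d ih =>
    rw [pow_succ', mul_apply_eq_comp, ← adjoint_inner_left, ← hD.apply_adjoint, ih, pow_succ,
      mul_apply_eq_comp]

theorem inner_dilationOrbit_add (hD : IsIsometricDilation T V E) (j d : ℕ) (h g : H) :
    ⟪dilationOrbit V E (j, h), dilationOrbit V E (j + d, g)⟫_𝕜 = ⟪(adjoint T ^ d) h, g⟫_𝕜 := by
  rw [dilationOrbit, dilationOrbit, pow_add, mul_apply_eq_comp,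
    inner_pow_apply_pow_apply_of_norm_map hD.norm_map, hD.inner_apply_pow_apply]

theorem inner_dilationOrbit_eq {K' : Type*} [NormedAddCommGroup K'] [InnerProductSpace 𝕜 K']
    [CompleteSpace K'] {V' : K' →L[𝕜] K'} {E' : H →ₗᵢ[𝕜] K'}
    (hD : IsIsometricDilation T V E) (hD' : IsIsometricDilation T V' E') (p q : ℕ × H) :
    ⟪dilationOrbit V E p, dilationOrbit V E q⟫_𝕜 =
      ⟪dilationOrbit V' E' p, dilationOrbit V' E' q⟫_𝕜 := by
  obtain ⟨j, h⟩ := p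
  obtain ⟨k, g⟩ := q
  rcases le_total j k with hjk | hkj
  · obtain ⟨d, rfl⟩ := Nat.exists_eq_add_of_le hjk
    rw [hD.inner_dilationOrbit_add, hD'.inner_dilationOrbit_add]
  · obtain ⟨d, rfl⟩ := Nat.exists_eq_add_of_le hkj
    rw [← inner_conj_symm, ← inner_conj_symm (dilationOrbit V' E' _),
      hD.inner_dilationOrbit_add, hD'.inner_dilationOrbit_add]

theorem adjoint_dilationOrbit_zero (hD : IsIsometricDilation T V E) (h : H) :
    adjoint V (dilationOrbit V E (0, h)) = dilationOrbit V E (0, adjoint T h) :=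
  (hD.apply_adjoint h).symm

theorem adjoint_dilationOrbit_succ (hD : IsIsometricDilation T V E) (k : ℕ) (h : H) :
    adjoint V (dilationOrbit V E (k + 1, h)) = dilationOrbit V E (k, h) := by
  rw [dilationOrbit_succ, adjoint_apply_apply_of_norm_map hD.norm_map]

variable {Km : Type*} [NormedAddCommGroup Km] [InnerProductSpace 𝕜 Km] [CompleteSpace Km]
  {Vm : Km →L[𝕜] Km} {Em : H →ₗᵢ[𝕜] Km}

theorem apply_adjoint_eq_of_apply_dilationOrbit (hD : IsIsometricDilation T V E)
    (hDm : IsIsometricDilation T Vm Em)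
    (hmin : Dense (Submodule.span 𝕜 (Set.range (dilationOrbit Vm Em)) : Set Km))
    {Ξ : Km →L[𝕜] K} (hΞ : ∀ p, Ξ (dilationOrbit Vm Em p) = dilationOrbit V E p) (x : Km) :
    Ξ (adjoint Vm x) = adjoint V (Ξ x) := by
  suffices Ξ ∘L adjoint Vm = adjoint V ∘L Ξ from congr($this x)
  refine ext_on hmin ?_
  rintro _ ⟨⟨k, h⟩, rfl⟩
  cases k with
  | zero =>
    simp only [comp_apply, hDm.adjoint_dilationOrbit_zero, hΞ, hD.adjoint_dilationOrbit_zero]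
  | succ k =>
    simp only [comp_apply, hDm.adjoint_dilationOrbit_succ, hΞ, hD.adjoint_dilationOrbit_succ]

theorem apply_dilationOrbit_of_apply_adjoint (hD : IsIsometricDilation T V E)
    (hDm : IsIsometricDilation T Vm Em) {Ξ : Km →ₗᵢ[𝕜] K} (hΞE : ∀ h, Ξ (Em h) = E h)
    (hΞV : ∀ x, Ξ (adjoint Vm x) = adjoint V (Ξ x)) (p : ℕ × H) :
    Ξ (dilationOrbit Vm Em p) = dilationOrbit V E p := by
  obtain ⟨k, h⟩ := p
  induction k with
  | zero => exact hΞE h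
  | succ k ih =>
    rw [dilationOrbit_succ, dilationOrbit_succ,
      Ξ.apply_apply_eq_of_apply_adjoint hD.norm_map hDm.norm_map hΞV, ih]

end IsIsometricDilation

end Dilation

theorem factorization_of_isometric_dilations_general
    {H K Km : Type*} [NormedAddCommGroup H] [InnerProductSpace ℂ H] [CompleteSpace H]
    [NormedAddCommGroup K] [InnerProductSpace ℂ K] [CompleteSpace K]
    [NormedAddCommGroup Km] [InnerProductSpace ℂ Km] [CompleteSpace Km]
    (T : H →L[ℂ] H)
    (V : K →L[ℂ] K) (hV : ∀ x, ‖V x‖ = ‖x‖)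
    (E : H →ₗᵢ[ℂ] K) (hE : ∀ h : H, E (adjoint T h) = adjoint V (E h))
    (Vm : Km →L[ℂ] Km) (hVm : ∀ x, ‖Vm x‖ = ‖x‖)
    (Em : H →ₗᵢ[ℂ] Km) (hEm : ∀ h : H, Em (adjoint T h) = adjoint Vm (Em h))
    (hmin : (Submodule.span ℂ (⋃ k : ℕ, (Vm ^ k) '' Set.range Em)).topologicalClosure = ⊤) :
    ∃! Xi : Km →ₗᵢ[ℂ] K,
      (∀ h : H, Xi (Em h) = E h) ∧
      (∀ x : Km, Xi (adjoint Vm x) = adjoint V (Xi x)) := by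
  have hD : IsIsometricDilation T V E := ⟨hV, hE⟩
  have hDm : IsIsometricDilation T Vm Em := ⟨hVm, hEm⟩
  have hdense : Dense (Submodule.span ℂ (Set.range (dilationOrbit Vm Em)) : Set Km) := by
    rw [range_dilationOrbit]
    exact Submodule.dense_iff_topologicalClosure_eq_top.mpr hmin
  obtain ⟨Xi, hXi⟩ :=
    LinearIsometry.exists_apply_eq_of_inner_eq hdense (hDm.inner_dilationOrbit_eq hD)
  refine ⟨Xi, ⟨fun h => hXi (0, h),
    hD.apply_adjoint_eq_of_apply_dilationOrbit hDm hdense (Ξ := Xi.toContinuousLinearMap) hXi⟩, ?_⟩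
  rintro Xi' ⟨hXi'E, hXi'V⟩
  refine LinearIsometry.toContinuousLinearMap_injective (ext_on hdense ?_)
  rintro _ ⟨p, rfl⟩
  exact (hD.apply_dilationOrbit_of_apply_adjoint hDm hXi'E hXi'V p).trans (hXi p).symm

/-- (Factorization of isometric dilations.) If `(V, E)` is an isometric
dilation of a contraction `T` and `(V_m, E_m)` is a *minimal* isometric dilation of `T`, then
there is a unique linear isometry `Ξ : K_m → K` with `E = Ξ ∘ E_m` and `Ξ V_m* = V* Ξ`. -/
theorem factorization_of_isometric_dilations
    {H K Km : Type*} [NormedAddCommGroup H] [InnerProductSpace ℂ H] [CompleteSpace H]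
    [NormedAddCommGroup K] [InnerProductSpace ℂ K] [CompleteSpace K]
    [NormedAddCommGroup Km] [InnerProductSpace ℂ Km] [CompleteSpace Km]
    (T : H →L[ℂ] H) (hT : ‖T‖ ≤ 1)
    (V : K →L[ℂ] K) (hV : ∀ x, ‖V x‖ = ‖x‖)
    (E : H →ₗᵢ[ℂ] K) (hE : ∀ h : H, E (adjoint T h) = adjoint V (E h))
    (Vm : Km →L[ℂ] Km) (hVm : ∀ x, ‖Vm x‖ = ‖x‖)
    (Em : H →ₗᵢ[ℂ] Km) (hEm : ∀ h : H, Em (adjoint T h) = adjoint Vm (Em h))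
    (hmin : (Submodule.span ℂ (⋃ k : ℕ, (Vm ^ k) '' Set.range Em)).topologicalClosure = ⊤) :
    ∃! Xi : Km →ₗᵢ[ℂ] K,
      (∀ h : H, Xi (Em h) = E h) ∧
      (∀ x : Km, Xi (adjoint Vm x) = adjoint V (Xi x)) :=
  factorization_of_isometric_dilations_general T V hV E hE Vm hVm Em hEm hmin
end
end
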